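/- Let X₁ and X₂ be independent random variables and Y = f(X₁, X₂) square-integrable. Then Var(E[Y | (X₁, X₂)]) = Var(Y) ≥ Var(E[Y | X₁]) + Var(E[Y | X₂]); i.e., for independent inputs the interaction contribution D₁₂ = Var(Y) − Var(E[Y|X₁]) − Var(E[Y|X₂]) is nonnegative. -/

import Mathlib

open MeasureTheory ProbabilityTheory

section Aux

variable {α : Type*}

/-- The conditional expectation of an L² function is in L². -/
lemma memℒp_two_condexp_aux {m m0 : MeasurableSpace α} (hm : m ≤ m0) (μ : Measure α)
    [IsFiniteMeasure μ] {f : α → ℝ} (hf : MemLp f 2 μ) : MemLp (μ[f|m]) 2 μ := by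
  haveI : SigmaFinite (μ.trim hm) := inferInstance
  have h_eq : (condExpL2 ℝ ℝ hm (hf.toLp f) : α → ℝ) =ᵐ[μ] μ[f|m] := by
    refine ae_eq_condExp_of_forall_setIntegral_eq hm (hf.integrable one_le_two)
      (fun s hs hμs => integrableOn_condExpL2_of_measure_ne_top hm hμs.ne _)
      (fun s hs hμs => ?_) (aestronglyMeasurable_condExpL2 hm _)
    rw [integral_condExpL2_eq hm (hf.toLp f) hs hμs.ne]
    exact integral_congr_ae (ae_restrict_of_ae (hf.coeFn_toLp))
  exact (Lp.memLp ((condExpL2 ℝ ℝ hm (hf.toLp f) : lpMeas ℝ ℝ m 2 μ) : Lp ℝ 2 μ)).ae_eq h_eq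

lemma integrable_mul_of_memL2_aux [MeasurableSpace α] {μ : Measure α} {f g : α → ℝ}
    (hf : MemLp f 2 μ) (hg : MemLp g 2 μ) : Integrable (fun x => f x * g x) μ := by
  refine Integrable.mono' (hf.integrable_sq.add hg.integrable_sq)
    (hf.aestronglyMeasurable.mul hg.aestronglyMeasurable) (Filter.Eventually.of_forall fun x => ?_)
  simp only [Pi.add_apply, Real.norm_eq_abs, abs_mul]
  nlinarith [sq_nonneg (|f x| - |g x|), sq_abs (f x), sq_abs (g x), abs_nonneg (f x),
    abs_nonneg (g x)]

/-- E[f · E[f|m]] = E[(E[f|m])²]. -/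
lemma integral_mul_condexp_aux {m m0 : MeasurableSpace α} (hm : m ≤ m0) {μ : Measure α}
    [IsProbabilityMeasure μ] {f : α → ℝ} (hf : MemLp f 2 μ) :
    ∫ x, f x * (μ[f|m]) x ∂μ = ∫ x, ((μ[f|m]) x) ^ 2 ∂μ := by
  haveI : SigmaFinite (μ.trim hm) := inferInstance
  have hg2 : MemLp (μ[f|m]) 2 μ := memℒp_two_condexp_aux hm μ hf
  have hint : Integrable ((μ[f|m]) * f) μ := by
    exact integrable_mul_of_memL2_aux hg2 hf
  have h := condExp_mul_of_stronglyMeasurable_left (stronglyMeasurable_condExp (f := f) (m := m) (μ := μ))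
    hint (hf.integrable one_le_two)
  calc ∫ x, f x * (μ[f|m]) x ∂μ = ∫ x, ((μ[f|m]) * f) x ∂μ := by
        simp only [Pi.mul_apply, mul_comm]
    _ = ∫ x, (μ[(μ[f|m]) * f|m]) x ∂μ := (integral_condExp hm (f := (μ[f|m]) * f)).symm
    _ = ∫ x, ((μ[f|m]) x * (μ[f|m]) x) ∂μ := by
        refine integral_congr_ae (h.mono fun x hx => ?_)
        simp only [hx, Pi.mul_apply]
    _ = ∫ x, ((μ[f|m]) x) ^ 2 ∂μ := by simp only [sq]

end Aux

/-- For independent inputs X₁, X₂ and square-integrable Y = f(X₁, X₂),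
Var(E[Y|(X₁,X₂)]) = Var(Y) and Var(E[Y|X₁]) + Var(E[Y|X₂]) ≤ Var(Y), i.e. the
interaction contribution D₁₂ is nonnegative. -/
theorem stmt_10 {Ω E₁ E₂ : Type*} [MeasurableSpace Ω] [MeasurableSpace E₁] [MeasurableSpace E₂]
    (P : Measure Ω) [IsProbabilityMeasure P]
    (X₁ : Ω → E₁) (X₂ : Ω → E₂) (hX₁ : Measurable X₁) (hX₂ : Measurable X₂)
    (hindep : IndepFun X₁ X₂ P)
    (f : E₁ × E₂ → ℝ) (hf : Measurable f)
    (Y : Ω → ℝ) (hY : Y = fun ω => f (X₁ ω, X₂ ω)) (hY2 : MemLp Y 2 P) :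
    variance (P[Y | MeasurableSpace.comap (fun ω => (X₁ ω, X₂ ω)) inferInstance]) P
      = variance Y P ∧
    variance (P[Y | MeasurableSpace.comap X₁ inferInstance]) P
        + variance (P[Y | MeasurableSpace.comap X₂ inferInstance]) P
      ≤ variance Y P := by
  have hm : MeasurableSpace.comap (fun ω => (X₁ ω, X₂ ω)) inferInstance ≤ ‹MeasurableSpace Ω› :=
    (hX₁.prodMk hX₂).comap_le
  have hm₁ : MeasurableSpace.comap X₁ inferInstance ≤ ‹MeasurableSpace Ω› := hX₁.comap_le
  have hm₂ : MeasurableSpace.comap X₂ inferInstance ≤ ‹MeasurableSpace Ω› := hX₂.comap_le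
  have hint : Integrable Y P := hY2.integrable one_le_two
  constructor
  · -- Y is measurable w.r.t. σ(X₁, X₂), so the conditional expectation is Y itself.
    have hYm : StronglyMeasurable[MeasurableSpace.comap (fun ω => (X₁ ω, X₂ ω)) inferInstance] Y := by
      rw [hY]
      exact (hf.comp (measurable_iff_comap_le.mpr le_rfl)).stronglyMeasurable
    rw [condExp_of_stronglyMeasurable hm hYm hint]
  · set Y₁ := P[Y|MeasurableSpace.comap X₁ inferInstance] with hY₁def
    set Y₂ := P[Y|MeasurableSpace.comap X₂ inferInstance] with hY₂def
    have h1 : MemLp Y₁ 2 P := memℒp_two_condexp_aux hm₁ P hY2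
    have h2 : MemLp Y₂ 2 P := memℒp_two_condexp_aux hm₂ P hY2
    have hi1 : Integrable Y₁ P := integrable_condExp
    have hi2 : Integrable Y₂ P := integrable_condExp
    have hE1 : ∫ ω, Y₁ ω ∂P = ∫ ω, Y ω ∂P := integral_condExp hm₁
    have hE2 : ∫ ω, Y₂ ω ∂P = ∫ ω, Y ω ∂P := integral_condExp hm₂
    -- E[Y·Y₁] = E[Y₁²], E[Y·Y₂] = E[Y₂²]
    have hb : ∫ ω, Y ω * Y₁ ω ∂P = ∫ ω, (Y₁ ω) ^ 2 ∂P := integral_mul_condexp_aux hm₁ hY2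
    have hc : ∫ ω, Y ω * Y₂ ω ∂P = ∫ ω, (Y₂ ω) ^ 2 ∂P := integral_mul_condexp_aux hm₂ hY2
    -- Y₁ and Y₂ are independent
    have hindY : IndepFun Y₁ Y₂ P := by
      rw [IndepFun_iff_Indep]
      have hind : Indep (MeasurableSpace.comap X₁ inferInstance)
          (MeasurableSpace.comap X₂ inferInstance) P := (IndepFun_iff_Indep _ _ _).mp hindep
      exact indep_of_indep_of_le_left
        (indep_of_indep_of_le_right hind
          (stronglyMeasurable_condExp.measurable.comap_le))
        (stronglyMeasurable_condExp.measurable.comap_le)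
    have hbc : ∫ ω, Y₁ ω * Y₂ ω ∂P = (∫ ω, Y ω ∂P) * (∫ ω, Y ω ∂P) := by
      have := hindY.integral_mul_eq_mul_integral hi1.aestronglyMeasurable hi2.aestronglyMeasurable
      simpa [hE1, hE2] using this
    -- define g = Y - Y₁ - Y₂
    set g : Ω → ℝ := fun ω => Y ω - Y₁ ω - Y₂ ω with hgdef
    have hg2 : MemLp g 2 P := (hY2.sub h1).sub h2
    have e1 : (∫ ω, (Y ω - Y₁ ω - Y₂ ω) ∂P) = (∫ ω, (Y ω - Y₁ ω) ∂P) - ∫ ω, Y₂ ω ∂P :=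
      integral_sub (hint.sub hi1) hi2
    have e2 : (∫ ω, (Y ω - Y₁ ω) ∂P) = (∫ ω, Y ω ∂P) - ∫ ω, Y₁ ω ∂P := integral_sub hint hi1
    have hEg : ∫ ω, g ω ∂P = -(∫ ω, Y ω ∂P) := by
      simp only [hgdef]
      rw [e1, e2, hE1, hE2]; ring
    -- integrability of all the pieces
    have iA : Integrable (fun ω => Y ω ^ 2) P := hY2.integrable_sq
    have iB : Integrable (fun ω => Y₁ ω ^ 2) P := h1.integrable_sq
    have iC : Integrable (fun ω => Y₂ ω ^ 2) P := h2.integrable_sq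
    have iYY1 : Integrable (fun ω => Y ω * Y₁ ω) P := integrable_mul_of_memL2_aux hY2 h1
    have iYY2 : Integrable (fun ω => Y ω * Y₂ ω) P := integrable_mul_of_memL2_aux hY2 h2
    have iY1Y2 : Integrable (fun ω => Y₁ ω * Y₂ ω) P := integrable_mul_of_memL2_aux h1 h2
    have hEg2 : ∫ ω, g ω ^ 2 ∂P
        = ∫ ω, Y ω ^ 2 ∂P + ∫ ω, Y₁ ω ^ 2 ∂P + ∫ ω, Y₂ ω ^ 2 ∂P
          - 2 * ∫ ω, Y ω * Y₁ ω ∂P - 2 * ∫ ω, Y ω * Y₂ ω ∂P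
          + 2 * ∫ ω, Y₁ ω * Y₂ ω ∂P := by
      have heq : (fun ω => g ω ^ 2)
          = fun ω => (Y ω ^ 2 + Y₁ ω ^ 2 + Y₂ ω ^ 2 - 2 * (Y ω * Y₁ ω) - 2 * (Y ω * Y₂ ω))
            + 2 * (Y₁ ω * Y₂ ω) := by
        funext ω; simp only [hgdef]; ring
      have hA2 : Integrable (fun ω => Y ω ^ 2 + Y₁ ω ^ 2 + Y₂ ω ^ 2) P := (iA.add iB).add iC
      have hA1 : Integrable (fun ω => Y ω ^ 2 + Y₁ ω ^ 2 + Y₂ ω ^ 2 - 2 * (Y ω * Y₁ ω)) P :=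
        hA2.sub (iYY1.const_mul 2)
      have hA0 : Integrable
          (fun ω => Y ω ^ 2 + Y₁ ω ^ 2 + Y₂ ω ^ 2 - 2 * (Y ω * Y₁ ω) - 2 * (Y ω * Y₂ ω)) P :=
        hA1.sub (iYY2.const_mul 2)
      have E0 : ∫ ω, ((Y ω ^ 2 + Y₁ ω ^ 2 + Y₂ ω ^ 2 - 2 * (Y ω * Y₁ ω) - 2 * (Y ω * Y₂ ω))
            + 2 * (Y₁ ω * Y₂ ω)) ∂P
          = (∫ ω, (Y ω ^ 2 + Y₁ ω ^ 2 + Y₂ ω ^ 2 - 2 * (Y ω * Y₁ ω) - 2 * (Y ω * Y₂ ω)) ∂P)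
            + ∫ ω, 2 * (Y₁ ω * Y₂ ω) ∂P := integral_add hA0 (iY1Y2.const_mul 2)
      have E1 : ∫ ω, (Y ω ^ 2 + Y₁ ω ^ 2 + Y₂ ω ^ 2 - 2 * (Y ω * Y₁ ω) - 2 * (Y ω * Y₂ ω)) ∂P
          = (∫ ω, (Y ω ^ 2 + Y₁ ω ^ 2 + Y₂ ω ^ 2 - 2 * (Y ω * Y₁ ω)) ∂P)
            - ∫ ω, 2 * (Y ω * Y₂ ω) ∂P := integral_sub hA1 (iYY2.const_mul 2)
      have E2 : ∫ ω, (Y ω ^ 2 + Y₁ ω ^ 2 + Y₂ ω ^ 2 - 2 * (Y ω * Y₁ ω)) ∂P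
          = (∫ ω, (Y ω ^ 2 + Y₁ ω ^ 2 + Y₂ ω ^ 2) ∂P) - ∫ ω, 2 * (Y ω * Y₁ ω) ∂P :=
        integral_sub hA2 (iYY1.const_mul 2)
      have E3 : ∫ ω, (Y ω ^ 2 + Y₁ ω ^ 2 + Y₂ ω ^ 2) ∂P
          = (∫ ω, (Y ω ^ 2 + Y₁ ω ^ 2) ∂P) + ∫ ω, Y₂ ω ^ 2 ∂P := integral_add (iA.add iB) iC
      have E4 : ∫ ω, (Y ω ^ 2 + Y₁ ω ^ 2) ∂P = (∫ ω, Y ω ^ 2 ∂P) + ∫ ω, Y₁ ω ^ 2 ∂P :=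
        integral_add iA iB
      have E5 : ∫ ω, 2 * (Y₁ ω * Y₂ ω) ∂P = 2 * ∫ ω, Y₁ ω * Y₂ ω ∂P := integral_const_mul 2 _
      have E6 : ∫ ω, 2 * (Y ω * Y₂ ω) ∂P = 2 * ∫ ω, Y ω * Y₂ ω ∂P := integral_const_mul 2 _
      have E7 : ∫ ω, 2 * (Y ω * Y₁ ω) ∂P = 2 * ∫ ω, Y ω * Y₁ ω ∂P := integral_const_mul 2 _
      rw [heq, E0, E1, E2, E3, E4, E5, E6, E7]
    -- variance identities
    have vY : variance Y P = ∫ ω, Y ω ^ 2 ∂P - (∫ ω, Y ω ∂P) ^ 2 := by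
      rw [variance_eq_sub hY2]; simp only [Pi.pow_apply]
    have v1 : variance Y₁ P = ∫ ω, Y₁ ω ^ 2 ∂P - (∫ ω, Y ω ∂P) ^ 2 := by
      rw [variance_eq_sub h1]; simp only [Pi.pow_apply]; rw [hE1]
    have v2 : variance Y₂ P = ∫ ω, Y₂ ω ^ 2 ∂P - (∫ ω, Y ω ∂P) ^ 2 := by
      rw [variance_eq_sub h2]; simp only [Pi.pow_apply]; rw [hE2]
    have vg : variance g P = ∫ ω, g ω ^ 2 ∂P - (∫ ω, g ω ∂P) ^ 2 := by
      rw [variance_eq_sub hg2]; simp only [Pi.pow_apply]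
    have hgnn : 0 ≤ variance g P := variance_nonneg g P
    rw [vg, hEg2, hEg, hb, hc, hbc] at hgnn
    rw [vY, v1, v2]
    nlinarith [hgnn]
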